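/- arXiv:0903.3698 — 3 statements merged into one kernel-verified Lean document; each statement's English description precedes it below -/
import Mathlib

section
/- Let φ be an r-fold Pfister form over k (char k ≠ 2), b₁,…,bₙ ∈ k* with n ≥ 2, set b' = ⟨b₁,…,b_{n−1}⟩ and q = φ ⊗ b' ⊥ ⟨bₙ⟩. For every 0 ≤ d ≤ ⌊n/2⌋ − 1: i_W(φ ⊗ (b' ⊥ ⟨bₙ⟩)) > 2^r d if and only if i_W(q) > 2^r d. -/
/-!
The subform `q` has codimension `2^r - 1` in `φ ⊗ b`, so
`i_W(φ ⊗ b) - (2^r - 1) ≤ i_W(q) ≤ i_W(φ ⊗ b)`.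
If `φ` is anisotropic, `2^r` divides `i_W(φ ⊗ c)` for every diagonal `c`: Pfister forms are
round, so an isotropic `φ ⊗ c` splits off `φ ⊗ ⟨f, -f⟩`, which Witt cancellation removes.
Then `i_W(φ ⊗ b) > 2^r d` forces `i_W(φ ⊗ b) ≥ 2^r (d + 1)`, hence `i_W(q) > 2^r d`.
If `φ` is isotropic, its Witt index is at least `2^(r-1)`, so
`i_W(q) ≥ i_W(φ ⊗ b') ≥ (n - 1) 2^(r-1) > 2^r d` because `2d + 1 ≤ n - 1`.
-/

/-- The Witt index of a quadratic form: the maximal dimension of a totally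
isotropic subspace. -/
noncomputable def wittIndex (k : Type*) {V : Type*} [Field k] [AddCommGroup V]
    [Module k V] (q : QuadraticForm k V) : ℕ :=
  sSup {m | ∃ U : Submodule k V, (∀ x ∈ U, q x = 0) ∧ Module.finrank k U = m}

open Module QuadraticMap

namespace QuadraticMap

variable {k V W : Type*} [Field k] [AddCommGroup V] [Module k V] [AddCommGroup W] [Module k W]

lemma Equivalent.smul {Q₁ : QuadraticForm k V} {Q₂ : QuadraticForm k W}
    (h : Q₁.Equivalent Q₂) (t : k) : (t • Q₁).Equivalent (t • Q₂) :=
  let ⟨e⟩ := h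
  ⟨{ e.toLinearEquiv with map_app' := fun x => by simp [e.map_app] }⟩

lemma smul_prod (t : k) (Q₁ : QuadraticForm k V) (Q₂ : QuadraticForm k W) :
    t • Q₁.prod Q₂ = (t • Q₁).prod (t • Q₂) := by
  ext; simp [mul_add]

lemma polar_eq_zero_of_isotropic {Q : QuadraticForm k V} {U : Submodule k V}
    (hU : ∀ x ∈ U, Q x = 0) {x y : V} (hx : x ∈ U) (hy : y ∈ U) : polar Q x y = 0 := by
  simp [polar, hU x hx, hU y hy, hU _ (U.add_mem hx hy)]

variable {Q : QuadraticForm k V}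

lemma equivalent_mul_smul {s t : k} (hs : (s • Q).Equivalent Q) (ht : (t • Q).Equivalent Q) :
    ((s * t) • Q).Equivalent Q := by
  rw [mul_smul]; exact (ht.smul s).trans hs

lemma equivalent_inv_smul {t : k} (ht0 : t ≠ 0) (ht : (t • Q).Equivalent Q) :
    (t⁻¹ • Q).Equivalent Q := by
  simpa [inv_smul_smul₀ ht0] using (ht.smul t⁻¹).symm

lemma equivalent_mul_self_smul {c : k} (hc : c ≠ 0) (Q : QuadraticForm k V) :
    ((c * c) • Q).Equivalent Q :=
  ⟨{ LinearEquiv.smulOfNeZero k V c hc with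
      map_app' := fun x => by simp [QuadraticMap.map_smul] }⟩

def IsRound (Q : QuadraticForm k V) : Prop :=
  ∀ x, Q x ≠ 0 → (Q x • Q).Equivalent Q

lemma Equivalent.isRound {Q' : QuadraticForm k W} (h : Q.Equivalent Q')
    (hQ : IsRound Q) : IsRound Q' := by
  obtain ⟨e⟩ := h
  intro y hy
  have hval : Q (e.symm y) = Q' y := by rw [← e.map_app, e.apply_symm_apply]
  exact ((Equivalent.smul ⟨e⟩ _).symm.trans (hval ▸ hQ _ (hval ▸ hy))).trans ⟨e⟩

/-- The isometry `(x, y) ↦ (x + β y, x - α y)` realising `⟨α + β, αβ(α + β)⟩ ≅ ⟨α, β⟩`. -/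
lemma equivalent_prod_smul_add (Q : QuadraticForm k V) {α β : k} (h : α + β ≠ 0) :
    (((α + β) • Q).prod ((α * β * (α + β)) • Q)).Equivalent ((α • Q).prod (β • Q)) := by
  let F : V × V →ₗ[k] V × V :=
    (LinearMap.fst k V V + β • LinearMap.snd k V V).prod
      (LinearMap.fst k V V - α • LinearMap.snd k V V)
  let G : V × V →ₗ[k] V × V :=
    (α + β)⁻¹ • (α • LinearMap.fst k V V + β • LinearMap.snd k V V).prod
      (LinearMap.fst k V V - LinearMap.snd k V V)
  have hFG : F ∘ₗ G = LinearMap.id := by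
    ext <;> simp [F, G] <;> match_scalars <;> field_simp <;> ring
  have hGF : G ∘ₗ F = LinearMap.id := by
    ext <;> simp [F, G] <;> match_scalars <;> field_simp <;> ring
  have hQ : ∀ (c : k) (x y : V), Q (x + c • y) = Q x + c * c * Q y + c * polar Q x y := by
    intro c x y
    have h₁ : polar Q x (c • y) = c * polar Q x y := by rw [polar_smul_right, smul_eq_mul]
    have h₂ : Q (c • y) = c * c * Q y := by rw [QuadraticMap.map_smul, smul_eq_mul]
    rw [← h₁, ← h₂, polar]
    ring
  refine ⟨{ (LinearEquiv.ofLinearMap F G hFG hGF : (V × V) ≃ₗ[k] (V × V)) with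
    map_app' := fun ⟨x, y⟩ => ?_ }⟩
  change (α • Q) (x + β • y) + (β • Q) (x - α • y) =
    ((α + β) • Q) x + ((α * β * (α + β)) • Q) y
  simp only [sub_eq_add_neg, ← neg_smul, smul_apply, smul_eq_mul, hQ]
  ring

lemma prod_smul_equivalent_of_smul_equivalent {t : k} (ht : (t • Q).Equivalent Q) (b : k) :
    (t • Q.prod (b • Q)).Equivalent (Q.prod (b • Q)) := by
  rw [smul_prod, smul_comm t b]
  exact ht.prod (ht.smul b)

/-- A value `Q x + b Q y` with `Q x ≠ 0` is `Q x (1 + b')` for `b' = b Q y / Q x`; roundness of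
`Q` gives `Q ⊥ b Q ≅ Q ⊥ b' Q`, which has the similarity factor `1 + b'` by
`equivalent_prod_smul_add`. -/
lemma IsRound.prod_smul (hQ : IsRound Q) {b : k} (hb : b ≠ 0) : IsRound (Q.prod (b • Q)) := by
  rintro ⟨x, y⟩ hv
  simp only [prod_apply, smul_apply, smul_eq_mul] at hv ⊢
  by_cases hy : Q y = 0
  · rw [hy, mul_zero, add_zero] at hv ⊢
    exact prod_smul_equivalent_of_smul_equivalent (hQ x hv) b
  by_cases hx : Q x = 0
  · rw [hx, zero_add, smul_prod]
    have h₁ : ((b * Q y) • Q).Equivalent (b • Q) := by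
      rw [mul_smul]; exact (hQ y hy).smul b
    have h₂ : ((b * Q y) • b • Q).Equivalent Q := by
      rw [smul_smul, show b * Q y * b = b * b * Q y by ring, mul_smul]
      exact ((hQ y hy).smul _).trans (equivalent_mul_self_smul hb Q)
    exact (h₁.prod h₂).trans ⟨IsometryEquiv.prodComm _ _⟩
  set b' := b * (Q y * (Q x)⁻¹)
  have hR : (Q.prod (b' • Q)).Equivalent (Q.prod (b • Q)) := by
    refine (Equivalent.refl Q).prod ?_
    rw [mul_smul]
    exact (equivalent_mul_smul (hQ y hy) (equivalent_inv_smul hx (hQ x hx))).smul b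
  have hval : Q x + b * Q y = Q x * (1 + b') := by simp only [b']; field_simp
  have hb' : 1 + b' ≠ 0 := fun h => hv (by rw [hval, h, mul_zero])
  have hchain := equivalent_prod_smul_add Q hb'
  rw [one_smul, one_mul, mul_comm b', mul_smul, ← smul_prod] at hchain
  rw [hval, mul_smul]
  exact ((hR.symm.smul _).smul _).trans <| (hchain.smul _).trans <| (hR.smul _).trans <|
    prod_smul_equivalent_of_smul_equivalent (hQ x hx) b

end QuadraticMap

section WittIndex

variable {k V W : Type*} [Field k] [AddCommGroup V] [Module k V] [AddCommGroup W] [Module k W]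

lemma wittIndex_smul {t : k} (ht : t ≠ 0) (Q : QuadraticForm k V) :
    wittIndex k (t • Q) = wittIndex k Q := by
  simp only [wittIndex, smul_apply, smul_eq_mul, mul_eq_zero, ht, false_or]

lemma finrank_map_add_finrank_inf_ker [FiniteDimensional k V] (f : V →ₗ[k] W)
    (U : Submodule k V) :
    finrank k (U.map f) + finrank k (U ⊓ LinearMap.ker f : Submodule k V) = finrank k U := by
  have h := LinearMap.finrank_range_add_finrank_ker (f ∘ₗ U.subtype)
  rwa [LinearMap.range_comp, Submodule.range_subtype, LinearMap.ker_comp,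
    ← Submodule.finrank_map_subtype_eq, Submodule.map_comap_subtype] at h

variable [FiniteDimensional k V] [FiniteDimensional k W]

private lemma bddAbove_finrank_isotropic (Q : QuadraticForm k V) :
    BddAbove {m | ∃ U : Submodule k V, (∀ x ∈ U, Q x = 0) ∧ finrank k U = m} :=
  ⟨finrank k V, by rintro _ ⟨U, -, rfl⟩; exact U.finrank_le⟩

lemma finrank_le_wittIndex (Q : QuadraticForm k V) {U : Submodule k V}
    (hU : ∀ x ∈ U, Q x = 0) : finrank k U ≤ wittIndex k Q :=
  le_csSup (bddAbove_finrank_isotropic Q) ⟨U, hU, rfl⟩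

lemma exists_finrank_eq_wittIndex (Q : QuadraticForm k V) :
    ∃ U : Submodule k V, (∀ x ∈ U, Q x = 0) ∧ finrank k U = wittIndex k Q := by
  have h : wittIndex k Q ∈ {m | ∃ U : Submodule k V, (∀ x ∈ U, Q x = 0) ∧ finrank k U = m} :=
    Nat.sSup_mem ⟨0, ⊥, by simp, by simp⟩ (bddAbove_finrank_isotropic Q)
  exact h

lemma wittIndex_eq_zero_iff {Q : QuadraticForm k V} : wittIndex k Q = 0 ↔ Q.Anisotropic := by
  refine ⟨fun h x hx => ?_, fun hQ => ?_⟩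
  · by_contra hx0
    have := finrank_le_wittIndex Q (U := k ∙ x) fun y hy => by
      obtain ⟨c, rfl⟩ := Submodule.mem_span_singleton.mp hy
      rw [QuadraticMap.map_smul, hx, smul_zero]
    rw [finrank_span_singleton hx0, h] at this
    exact absurd this (by norm_num)
  · obtain ⟨U, hU, hUdim⟩ := exists_finrank_eq_wittIndex Q
    rw [← hUdim, Submodule.finrank_eq_zero, Submodule.eq_bot_iff]
    exact fun x hx => hQ x (hU x hx)

lemma wittIndex_le_of_injective {Q₁ : QuadraticForm k V} {Q₂ : QuadraticForm k W}
    (f : Q₁ →qᵢ Q₂) (hf : Function.Injective f) : wittIndex k Q₁ ≤ wittIndex k Q₂ := by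
  obtain ⟨U, hU, hUdim⟩ := exists_finrank_eq_wittIndex Q₁
  rw [← hUdim, (Submodule.equivMapOfInjective f.toLinearMap hf U).finrank_eq]
  refine finrank_le_wittIndex Q₂ ?_
  rintro _ ⟨x, hx, rfl⟩
  exact (f.map_app x).trans (hU x hx)

/-- A maximal totally isotropic subspace of `Q₂` meets the image of `f` in codimension at most
`finrank W - finrank V`. -/
lemma wittIndex_le_wittIndex_add_of_injective {Q₁ : QuadraticForm k V}
    {Q₂ : QuadraticForm k W} (f : Q₁ →qᵢ Q₂) (hf : Function.Injective f) :
    wittIndex k Q₂ ≤ wittIndex k Q₁ + (finrank k W - finrank k V) := by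
  obtain ⟨U, hU, hUdim⟩ := exists_finrank_eq_wittIndex Q₂
  have hpre : finrank k (U.comap f.toLinearMap) ≤ wittIndex k Q₁ :=
    finrank_le_wittIndex Q₁ fun x hx => (f.map_app x).symm.trans (hU _ hx)
  have hmeet : finrank k (LinearMap.range f.toLinearMap ⊓ U : Submodule k W) =
      finrank k (U.comap f.toLinearMap) := by
    rw [← Submodule.map_comap_eq,
      (Submodule.equivMapOfInjective f.toLinearMap hf _).finrank_eq.symm]
  have hsum := Submodule.finrank_sup_add_finrank_inf_eq (LinearMap.range f.toLinearMap) U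
  rw [LinearMap.finrank_range_of_inj hf] at hsum
  have := (LinearMap.range f.toLinearMap ⊔ U).finrank_le
  omega

lemma QuadraticMap.Equivalent.wittIndex_eq {Q₁ : QuadraticForm k V} {Q₂ : QuadraticForm k W}
    (h : Q₁.Equivalent Q₂) : wittIndex k Q₁ = wittIndex k Q₂ :=
  let ⟨e⟩ := h
  (wittIndex_le_of_injective e.toIsometry e.injective).antisymm
    (wittIndex_le_of_injective e.symm.toIsometry e.symm.injective)

lemma wittIndex_add_wittIndex_le_prod (Q₁ : QuadraticForm k V) (Q₂ : QuadraticForm k W) :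
    wittIndex k Q₁ + wittIndex k Q₂ ≤ wittIndex k (Q₁.prod Q₂) := by
  obtain ⟨U₁, hU₁, h₁⟩ := exists_finrank_eq_wittIndex Q₁
  obtain ⟨U₂, hU₂, h₂⟩ := exists_finrank_eq_wittIndex Q₂
  have hinj : Function.Injective (U₁.subtype.prodMap U₂.subtype) :=
    U₁.injective_subtype.prodMap U₂.injective_subtype
  rw [← h₁, ← h₂, ← finrank_prod, ← LinearMap.finrank_range_of_inj hinj]
  refine finrank_le_wittIndex _ ?_
  rintro _ ⟨⟨x, y⟩, rfl⟩
  simp [hU₁ _ x.2, hU₂ _ y.2]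

/-- The graph of `g` is totally isotropic. -/
lemma finrank_le_wittIndex_prod {Q₁ : QuadraticForm k V} {Q₂ : QuadraticForm k W}
    (g : V →ₗ[k] W) (hg : ∀ x, Q₂ (g x) = -Q₁ x) : finrank k V ≤ wittIndex k (Q₁.prod Q₂) := by
  have hinj : Function.Injective (LinearMap.id.prod g) := fun x y h => congrArg Prod.fst h
  rw [← LinearMap.finrank_range_of_inj hinj]
  refine finrank_le_wittIndex _ ?_
  rintro _ ⟨x, rfl⟩
  simp [hg]

/-- Witt cancellation of the hyperbolic space `P ⊥ -P`. For a totally isotropic `U`, the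
vectors `(0, x, x) ∈ U` are orthogonal (for `P`) to all differences `y - z` of `(v, y, z) ∈ U`,
and the vectors `(v, y, y) ∈ U` project to a totally isotropic subspace of `Q`. -/
lemma wittIndex_prod_prod_neg_le {Q : QuadraticForm k V} {P : QuadraticForm k W}
    (hP : (polarBilin P).Nondegenerate) :
    wittIndex k (Q.prod (P.prod (-P))) ≤ wittIndex k Q + finrank k W := by
  obtain ⟨U, hU, hUdim⟩ := exists_finrank_eq_wittIndex (Q.prod (P.prod (-P)))
  let π : V × W × W →ₗ[k] W :=
    (LinearMap.fst k W W - LinearMap.snd k W W) ∘ₗ LinearMap.snd k V (W × W)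
  let ρ := LinearMap.fst k V (W × W)
  let σ : V × W × W →ₗ[k] W := LinearMap.fst k W W ∘ₗ LinearMap.snd k V (W × W)
  have mem_ker_π {u : V × W × W} : u ∈ LinearMap.ker π ↔ u.2.1 = u.2.2 := by
    simp [π, sub_eq_zero]
  let K := U ⊓ LinearMap.ker π
  let D := K ⊓ LinearMap.ker ρ
  have hK : finrank k (U.map π) + finrank k K = finrank k U := finrank_map_add_finrank_inf_ker π U
  have hD : finrank k (K.map ρ) + finrank k D = finrank k K := finrank_map_add_finrank_inf_ker ρ K
  have hσ : finrank k (D.map σ) = finrank k D := by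
    rw [← finrank_map_add_finrank_inf_ker σ D, left_eq_add, Submodule.finrank_eq_zero,
      Submodule.eq_bot_iff]
    rintro ⟨v, y, z⟩ ⟨⟨⟨-, hπ⟩, hρ : v = 0⟩, hσ : y = 0⟩
    replace hπ : y = z := mem_ker_π.1 hπ
    simp_all
  have hQ : finrank k (K.map ρ) ≤ wittIndex k Q := by
    refine finrank_le_wittIndex Q ?_
    rintro _ ⟨⟨v, y, z⟩, ⟨hu, hπ⟩, rfl⟩
    replace hπ : y = z := mem_ker_π.1 hπ
    simpa [ρ, hπ] using hU _ hu
  have hperp : D.map σ ≤ LinearMap.BilinForm.orthogonal (polarBilin P) (U.map π) := by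
    rintro _ ⟨⟨v, y, z⟩, ⟨⟨hd, hπ⟩, hρ : v = 0⟩, rfl⟩
    replace hπ : y = z := mem_ker_π.1 hπ
    subst hρ hπ
    rw [LinearMap.BilinForm.mem_orthogonal_iff]
    rintro _ ⟨⟨v', y', z'⟩, hu, rfl⟩
    have h0 := polar_eq_zero_of_isotropic hU hu hd
    rw [polar_prod, polar_prod, show ⇑(-P) = -⇑P from rfl, polar_neg, polar_zero_right] at h0
    show polar P (y' - z') y = 0
    rw [polar_sub_left]
    linear_combination h0
  have hle := Submodule.finrank_mono hperp
  rw [LinearMap.BilinForm.finrank_orthogonal hP] at hle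
  have := (U.map π).finrank_le
  omega

lemma wittIndex_prod_prod_neg {Q : QuadraticForm k V} {P : QuadraticForm k W}
    (hP : (polarBilin P).Nondegenerate) :
    wittIndex k (Q.prod (P.prod (-P))) = wittIndex k Q + finrank k W :=
  (wittIndex_prod_prod_neg_le hP).antisymm <|
    (Nat.add_le_add_left (finrank_le_wittIndex_prod (Q₁ := P) (Q₂ := -P) LinearMap.id
      fun _ => rfl) _).trans (wittIndex_add_wittIndex_le_prod Q (P.prod (-P)))

/-- If `Q x + b Q y = 0` with `Q x, Q y ≠ 0`, roundness makes `-b⁻¹ = Q y / Q x` a similarity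
factor of `Q`, and the graph of the similarity is totally isotropic in `Q ⊥ b Q`. -/
lemma QuadraticMap.IsRound.finrank_le_wittIndex_prod_smul {Q : QuadraticForm k V}
    (hQ : IsRound Q) (hQa : Q.Anisotropic) {b : k} (hb : b ≠ 0)
    (h : ¬(Q.prod (b • Q)).Anisotropic) :
    finrank k V ≤ wittIndex k (Q.prod (b • Q)) := by
  simp only [QuadraticMap.Anisotropic, not_forall] at h
  obtain ⟨⟨x, y⟩, hxy, hne⟩ := h
  simp only [prod_apply, smul_apply, smul_eq_mul] at hxy
  have hy : Q y ≠ 0 := fun hy => hne <| by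
    rw [hy, mul_zero, add_zero] at hxy
    rw [hQa x hxy, hQa y hy, Prod.mk_zero_zero]
  have hx : Q x ≠ 0 := by
    rw [eq_neg_of_add_eq_zero_left hxy]; exact neg_ne_zero.2 (mul_ne_zero hb hy)
  have hs : Q y * (Q x)⁻¹ = -b⁻¹ := by
    rw [eq_neg_of_add_eq_zero_left hxy]; field_simp
  obtain ⟨e⟩ := equivalent_mul_smul (hQ y hy) (equivalent_inv_smul hx (hQ x hx))
  refine finrank_le_wittIndex_prod e.toLinearMap fun z => ?_
  have hz : Q (e z) = -b⁻¹ * Q z := by rw [← hs]; exact e.map_app z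
  simp only [smul_apply, smul_eq_mul]
  rw [show e.toLinearMap z = e z from rfl, hz]
  field_simp

end WittIndex

section Diagonal

variable {k : Type*} [Field k] {ι κ γ : Type*} [Fintype ι] [Fintype κ] [Fintype γ]

noncomputable abbrev diagForm (w : ι → k) : QuadraticForm k (ι → k) := weightedSumSquares k w

notation:50 w₁:51 " ≃ᵈ " w₂:51 => QuadraticMap.Equivalent (diagForm w₁) (diagForm w₂)

lemma diagForm_apply (w x : ι → k) : diagForm w x = ∑ i, w i * (x i * x i) := by
  simp [weightedSumSquares_apply]

lemma diagForm_smul (t : k) (w : ι → k) : diagForm (t • w) = t • diagForm w := by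
  ext x; simp [Finset.mul_sum, mul_assoc]

lemma diagForm_neg (w : ι → k) : diagForm (-w) = -diagForm w := by
  ext x; simp

lemma diagForm_sum_elim_equivalent (w₁ : ι → k) (w₂ : κ → k) :
    (diagForm (Sum.elim w₁ w₂)).Equivalent ((diagForm w₁).prod (diagForm w₂)) :=
  ⟨{ LinearEquiv.sumArrowLequivProdArrow ι κ k k with
      map_app' := fun x => by simp [Fintype.sum_sum_type] }⟩

lemma diagForm_equivalent_of_equiv {w₁ : ι → k} {w₂ : κ → k} (e : κ ≃ ι)
    (h : ∀ j, w₂ j = w₁ (e j)) : w₁ ≃ᵈ w₂ :=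
  ⟨{ LinearEquiv.funCongrLeft k k e with
      map_app' := fun x => by
        simp only [diagForm_apply, h]
        exact e.sum_comp fun i => w₁ i * (x i * x i) }⟩

lemma QuadraticMap.Equivalent.sum_elim {ι' κ' : Type*} [Fintype ι'] [Fintype κ'] {w₁ : ι → k}
    {w₁' : ι' → k} {w₂ : κ → k} {w₂' : κ' → k} (h₁ : w₁ ≃ᵈ w₁') (h₂ : w₂ ≃ᵈ w₂') :
    Sum.elim w₁ w₂ ≃ᵈ Sum.elim w₁' w₂' :=
  (diagForm_sum_elim_equivalent _ _).trans <|
    (h₁.prod h₂).trans (diagForm_sum_elim_equivalent _ _).symm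

lemma sum_elim_assoc_equivalent (w₁ : ι → k) (w₂ : κ → k) (w₃ : γ → k) :
    Sum.elim (Sum.elim w₁ w₂) w₃ ≃ᵈ Sum.elim w₁ (Sum.elim w₂ w₃) :=
  diagForm_equivalent_of_equiv (Equiv.sumAssoc ι κ γ).symm (by rintro (j | j | j) <;> rfl)

lemma wittIndex_add_wittIndex_le_sum_elim (w₁ : ι → k) (w₂ : κ → k) :
    wittIndex k (diagForm w₁) + wittIndex k (diagForm w₂) ≤
      wittIndex k (diagForm (Sum.elim w₁ w₂)) :=
  (diagForm_sum_elim_equivalent w₁ w₂).wittIndex_eq ▸ wittIndex_add_wittIndex_le_prod _ _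

lemma ne_zero_of_anisotropic_diagForm {w : ι → k} (h : (diagForm w).Anisotropic) (i : ι) :
    w i ≠ 0 := by
  classical
  intro hi
  have := congrFun (h (Pi.single i 1) (by simp [Pi.single_apply, hi])) i
  simp at this

lemma nondegenerate_polarBilin_diagForm (h2 : (2 : k) ≠ 0) {w : ι → k} (hw : ∀ i, w i ≠ 0) :
    (polarBilin (diagForm w)).Nondegenerate := by
  have : Invertible (2 : k) := invertibleOfNonzero h2
  have : NeZero (2 : k) := ⟨h2⟩
  rw [nondegenerate_polar_iff, nondegenerate_iff_radical_eq_bot,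
    QuadraticForm.radical_weightedSumSquares, eq_bot_iff]
  intro v hv
  simpa [Pi.mem_spanSubset_iff, hw, funext_iff] using hv

lemma wittIndex_sum_elim_sum_elim_neg (h2 : (2 : k) ≠ 0) (X : κ → k) {w : ι → k}
    (hw : ∀ i, w i ≠ 0) :
    wittIndex k (diagForm (Sum.elim X (Sum.elim w (-w)))) =
      wittIndex k (diagForm X) + Fintype.card ι := by
  rw [((diagForm_sum_elim_equivalent _ _).trans
      ((Equivalent.refl _).prod (diagForm_sum_elim_equivalent _ _))).wittIndex_eq, diagForm_neg,
    wittIndex_prod_prod_neg (nondegenerate_polarBilin_diagForm h2 hw),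
    finrank_fintype_fun_eq_card]

end Diagonal

section Pfister

variable {k : Type*} [Field k]

/-- The diagonal weights of the Pfister form `⟪a₁, …, a_r⟫ = ⊗ᵢ ⟨1, -aᵢ⟩`. -/
def pfister {r : ℕ} (a : Fin r → k) : Finset (Fin r) → k := fun S => ∏ i ∈ S, -a i

lemma pfister_empty {r : ℕ} (a : Fin r → k) : pfister a ∅ = 1 := Finset.prod_empty

open Finset in
noncomputable def finsetSuccEquiv (r : ℕ) :
    Finset (Fin r) ⊕ Finset (Fin r) ≃ Finset (Fin (r + 1)) where
  toFun := Sum.elim (map (Fin.succEmb r)) fun S => insert 0 (S.map (Fin.succEmb r))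
  invFun T := if 0 ∈ T then .inr (T.preimage Fin.succ (Fin.succ_injective r).injOn)
    else .inl (T.preimage Fin.succ (Fin.succ_injective r).injOn)
  left_inv := by
    rintro (S | S) <;> simp [Fin.succ_ne_zero] <;> ext <;> simp
  right_inv T := by
    by_cases h : 0 ∈ T <;> ext x <;> cases x using Fin.cases <;> simp [h]

lemma pfister_succ_equivalent {r : ℕ} (a : Fin (r + 1) → k) :
    (diagForm (pfister a)).Equivalent
      ((diagForm (pfister (Fin.tail a))).prod ((-a 0) • diagForm (pfister (Fin.tail a)))) := by
  have h := diagForm_sum_elim_equivalent (pfister (Fin.tail a)) ((-a 0) • pfister (Fin.tail a))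
  rw [diagForm_smul] at h
  refine (diagForm_equivalent_of_equiv (finsetSuccEquiv r) ?_).trans h
  rintro (S | S) <;>
    simp [finsetSuccEquiv, pfister, Fin.tail, Finset.prod_map, Finset.prod_insert, Fin.succ_ne_zero]

lemma diagForm_pfister_zero_apply (a : Fin 0 → k) (x : Finset (Fin 0) → k) :
    diagForm (pfister a) x = x ∅ * x ∅ := by
  rw [diagForm_apply, Fintype.sum_subsingleton _ ∅, pfister_empty, one_mul]

lemma anisotropic_pfister_zero (a : Fin 0 → k) : (diagForm (pfister a)).Anisotropic := by
  intro x hx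
  rw [diagForm_pfister_zero_apply, mul_self_eq_zero] at hx
  ext S
  rwa [Subsingleton.elim S ∅]

theorem isRound_pfister {r : ℕ} {a : Fin r → k} (ha : ∀ i, a i ≠ 0) :
    IsRound (diagForm (pfister a)) := by
  induction r with
  | zero =>
    intro x hx
    rw [diagForm_pfister_zero_apply] at hx ⊢
    exact equivalent_mul_self_smul (left_ne_zero_of_mul hx) _
  | succ r ih =>
    exact (pfister_succ_equivalent a).symm.isRound
      ((ih (a := Fin.tail a) fun i => ha i.succ).prod_smul (neg_ne_zero.2 (ha 0)))

theorem two_pow_le_two_mul_wittIndex_pfister {r : ℕ} {a : Fin r → k} (ha : ∀ i, a i ≠ 0)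
    (h : ¬(diagForm (pfister a)).Anisotropic) :
    2 ^ r ≤ 2 * wittIndex k (diagForm (pfister a)) := by
  induction r with
  | zero => exact absurd (anisotropic_pfister_zero a) h
  | succ r ih =>
    have hb : -a 0 ≠ 0 := neg_ne_zero.2 (ha 0)
    have e := pfister_succ_equivalent a
    rw [← wittIndex_eq_zero_iff, e.wittIndex_eq, wittIndex_eq_zero_iff] at h
    rw [e.wittIndex_eq, pow_succ]
    by_cases hφ : (diagForm (pfister (Fin.tail a))).Anisotropic
    · have := (isRound_pfister (a := Fin.tail a) fun i => ha i.succ).finrank_le_wittIndex_prod_smul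
        hφ hb h
      rw [finrank_fintype_fun_eq_card, Fintype.card_finset, Fintype.card_fin] at this
      omega
    · have h₁ := ih (a := Fin.tail a) (fun i => ha i.succ) hφ
      have h₂ := wittIndex_add_wittIndex_le_prod (diagForm (pfister (Fin.tail a)))
        ((-a 0) • diagForm (pfister (Fin.tail a)))
      rw [wittIndex_smul hb] at h₂
      omega

end Pfister

section Tensor

variable {k : Type*} [Field k] {ι κ γ : Type*} [Fintype ι] [Fintype κ] [Fintype γ]

/-- The weights of `⟨w⟩ ⊗ ⟨c₀, …, c_{s-1}⟩`. -/
def tensor (w : ι → k) {s : ℕ} (c : Fin s → k) : ι × Fin s → k := fun p => w p.1 * c p.2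

lemma diagForm_tensor_apply (w : ι → k) {s : ℕ} (c : Fin s → k) (x : ι × Fin s → k) :
    diagForm (tensor w c) x = ∑ j, c j * diagForm w (fun i => x (i, j)) := by
  simp only [diagForm_apply, Fintype.sum_prod_type_right, Finset.mul_sum, tensor]
  exact Finset.sum_congr rfl fun j _ => Finset.sum_congr rfl fun i _ => by ring

lemma diagForm_tensor_apply_succAbove (w : ι → k) {s : ℕ} (c : Fin (s + 1) → k)
    (x : ι × Fin (s + 1) → k) (j : Fin (s + 1)) :
    diagForm (tensor w c) x = diagForm (tensor w (c ∘ j.succAbove))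
      (fun p => x (p.1, j.succAbove p.2)) + c j * diagForm w (fun i => x (i, j)) := by
  rw [diagForm_tensor_apply, Fin.sum_univ_succAbove _ j, add_comm, diagForm_tensor_apply]
  rfl

lemma tensor_equivalent_sum_elim (w : ι → k) {s : ℕ} (c : Fin (s + 1) → k) (j : Fin (s + 1)) :
    tensor w c ≃ᵈ Sum.elim (tensor w (c ∘ j.succAbove)) (c j • w) := by
  let e : ι × Fin (s + 1) ≃ (ι × Fin s) ⊕ ι :=
    (Equiv.prodComm _ _).trans <| ((finSuccEquiv' j).prodCongr (Equiv.refl ι)).trans <|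
      optionProdEquiv.trans <| ((Equiv.refl ι).sumCongr (Equiv.prodComm _ _)).trans
        (Equiv.sumComm _ _)
  refine diagForm_equivalent_of_equiv e.symm ?_
  rintro (⟨i, p⟩ | i) <;> simp [e, tensor, mul_comm]

lemma tensor_equivalent_sum_elim_castSucc (w : ι → k) {s : ℕ} (c : Fin (s + 1) → k) :
    tensor w c ≃ᵈ Sum.elim (tensor w (c ∘ Fin.castSucc)) (c (Fin.last s) • w) := by
  simpa [Fin.succAbove_last] using tensor_equivalent_sum_elim w c (Fin.last s)

lemma tensor_snoc_equivalent (w : ι → k) {s : ℕ} (c : Fin s → k) (γ : k) :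
    tensor w (Fin.snoc c γ) ≃ᵈ Sum.elim (tensor w c) (γ • w) := by
  simpa [Function.comp_def] using tensor_equivalent_sum_elim_castSucc w (Fin.snoc c γ)

lemma sum_elim_swap_equivalent (w₁ : ι → k) (w₂ : κ → k) (w₃ : γ → k) :
    Sum.elim (Sum.elim w₁ w₂) w₃ ≃ᵈ Sum.elim (Sum.elim w₁ w₃) w₂ :=
  diagForm_equivalent_of_equiv ((Equiv.sumAssoc ι γ κ).trans
    (((Equiv.refl ι).sumCongr (Equiv.sumComm γ κ)).trans (Equiv.sumAssoc ι κ γ).symm))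
    (by rintro ((i | i) | i) <;> rfl)

lemma sum_elim_smul_add_equivalent (w : ι → k) {α β : k} (h : α + β ≠ 0) :
    Sum.elim ((α + β) • w) ((α * β * (α + β)) • w) ≃ᵈ Sum.elim (α • w) (β • w) := by
  refine (diagForm_sum_elim_equivalent _ _).trans <|
    .trans ?_ (diagForm_sum_elim_equivalent _ _).symm
  simp only [diagForm_smul]
  exact equivalent_prod_smul_add _ h

variable {w : ι → k}

lemma QuadraticMap.IsRound.smul_equivalent (hw : IsRound (diagForm w)) {y : ι → k}
    (hy : diagForm w y ≠ 0) (t : k) : (t * diagForm w y) • w ≃ᵈ t • w := by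
  rw [diagForm_smul, diagForm_smul, mul_smul]
  exact (hw y hy).smul t

/-- A nonzero value `v` represented by `⟨w⟩ ⊗ ⟨c⟩` splits off as `v ⟨w⟩`; by induction on the
length of `c`, merging the last slot with the rest through `⟨α, β⟩ ≅ ⟨α + β, αβ(α + β)⟩`. -/
theorem QuadraticMap.IsRound.exists_tensor_equivalent (hw : IsRound (diagForm w)) {s : ℕ}
    {c : Fin (s + 1) → k} (hc : ∀ j, c j ≠ 0) {x : ι × Fin (s + 1) → k}
    (hx : diagForm (tensor w c) x ≠ 0) :
    ∃ c' : Fin s → k, (∀ j, c' j ≠ 0) ∧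
      tensor w c ≃ᵈ Sum.elim (tensor w c') (diagForm (tensor w c) x • w) := by
  induction s using Nat.strong_induction_on with
  | _ s ih =>
  have hsplit := tensor_equivalent_sum_elim w c (Fin.last s)
  have hval := diagForm_tensor_apply_succAbove w c x (Fin.last s)
  set c₀ := c ∘ (Fin.last s).succAbove
  set ρ := diagForm (tensor w c₀) fun p => x (p.1, (Fin.last s).succAbove p.2)
  set z : ι → k := fun i => x (i, Fin.last s)
  set α := c (Fin.last s) * diagForm w z
  by_cases hρ : ρ = 0
  · rw [hρ, zero_add] at hval
    have hz : diagForm w z ≠ 0 := fun h => hx (by rw [hval]; simp [α, h])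
    refine ⟨c₀, fun j => hc _, hsplit.trans ((Equivalent.refl _).sum_elim ?_)⟩
    rw [hval]
    exact (hw.smul_equivalent hz _).symm
  obtain _ | s := s
  · exact absurd (by simp [ρ]) hρ
  obtain ⟨c₃, hc₃, h₃⟩ := ih s s.lt_add_one (fun j => hc _) hρ
  have hsplit' := hsplit.trans (h₃.sum_elim (.refl _))
  by_cases hα : α = 0
  · rw [hα, add_zero] at hval
    refine ⟨Fin.snoc c₃ (c (Fin.last _)), Fin.lastCases (by simpa using hc _) (by simpa), ?_⟩
    rw [hval]
    exact hsplit'.trans <| (sum_elim_swap_equivalent _ _ _).trans <|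
      (tensor_snoc_equivalent w c₃ _).symm.sum_elim (.refl _)
  have hz : diagForm w z ≠ 0 := fun h => hα (by simp [α, h])
  have hρα : ρ + α ≠ 0 := hval ▸ hx
  refine ⟨Fin.snoc c₃ (ρ * α * (ρ + α)),
    Fin.lastCases (by simpa using mul_ne_zero (mul_ne_zero hρ hα) hρα) (by simpa), ?_⟩
  rw [hval]
  exact hsplit'.trans <| ((Equivalent.refl _).sum_elim (hw.smul_equivalent hz _).symm).trans <|
    (sum_elim_assoc_equivalent _ _ _).trans <|
    ((Equivalent.refl _).sum_elim (sum_elim_smul_add_equivalent w hρα).symm).trans <|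
    (sum_elim_assoc_equivalent _ _ _).symm.trans <| (sum_elim_swap_equivalent _ _ _).trans <|
    (tensor_snoc_equivalent w c₃ _).symm.sum_elim (.refl _)

/-- Over an anisotropic round `⟨w⟩`, an isotropic vector of `⟨w⟩ ⊗ ⟨c⟩` has a slot `j` with
value `α = c j · w(xⱼ) ≠ 0`; the other slots represent `-α`, which splits off by
`IsRound.exists_tensor_equivalent`, leaving the hyperbolic `α⟨w⟩ ⊥ -α⟨w⟩`. -/
theorem QuadraticMap.IsRound.exists_tensor_equivalent_of_not_anisotropic
    (hw : IsRound (diagForm w)) (hwa : (diagForm w).Anisotropic) {n : ℕ} {c : Fin n → k}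
    (hc : ∀ j, c j ≠ 0) (h : ¬(diagForm (tensor w c)).Anisotropic) :
    ∃ (n' : ℕ) (c' : Fin n' → k) (f : k), n = n' + 2 ∧ (∀ j, c' j ≠ 0) ∧ f ≠ 0 ∧
      tensor w c ≃ᵈ Sum.elim (tensor w c') (Sum.elim (f • w) (-(f • w))) := by
  simp only [QuadraticMap.Anisotropic, not_forall] at h
  obtain ⟨x, hx, hx0⟩ := h
  obtain ⟨j, hj⟩ : ∃ j, diagForm w (fun i => x (i, j)) ≠ 0 := by
    by_contra! hcol
    exact hx0 (funext fun p => congrFun (hwa _ (hcol p.2)) p.1)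
  obtain _ | n := n
  · exact j.elim0
  have hval := diagForm_tensor_apply_succAbove w c x j
  set ρ := diagForm (tensor w (c ∘ j.succAbove)) fun p => x (p.1, j.succAbove p.2)
  have hα : c j * diagForm w (fun i => x (i, j)) ≠ 0 := mul_ne_zero (hc j) hj
  have hρ : ρ = -(c j * diagForm w (fun i => x (i, j))) := by linear_combination hval.symm + hx
  obtain _ | n := n
  · exact absurd (by simp [ρ]) (hρ ▸ neg_ne_zero.2 hα)
  obtain ⟨c', hc', h'⟩ := hw.exists_tensor_equivalent (fun i => hc _) (hρ ▸ neg_ne_zero.2 hα)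
  refine ⟨n, c', ρ, rfl, hc', hρ ▸ neg_ne_zero.2 hα, ?_⟩
  have hneg : -(ρ • w) = (c j * diagForm w fun i => x (i, j)) • w := by
    rw [hρ, neg_smul, neg_neg]
  rw [hneg]
  exact (tensor_equivalent_sum_elim w c j).trans <|
    (h'.sum_elim (hw.smul_equivalent hj _).symm).trans (sum_elim_assoc_equivalent _ _ _)

theorem card_dvd_wittIndex_tensor (h2 : (2 : k) ≠ 0) (hw : IsRound (diagForm w))
    (hwa : (diagForm w).Anisotropic) {n : ℕ} {c : Fin n → k} (hc : ∀ j, c j ≠ 0) :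
    Fintype.card ι ∣ wittIndex k (diagForm (tensor w c)) := by
  induction n using Nat.strong_induction_on with
  | _ n ih =>
  by_cases h : (diagForm (tensor w c)).Anisotropic
  · rw [wittIndex_eq_zero_iff.2 h]
    exact dvd_zero _
  obtain ⟨n', c', f, rfl, hc', hf, e⟩ := hw.exists_tensor_equivalent_of_not_anisotropic hwa hc h
  rw [e.wittIndex_eq, wittIndex_sum_elim_sum_elim_neg h2 _ (w := f • w)
    fun i => mul_ne_zero hf (ne_zero_of_anisotropic_diagForm hwa i)]
  exact dvd_add (ih n' (by omega) hc') dvd_rfl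

lemma mul_wittIndex_le_wittIndex_tensor {s : ℕ} {c : Fin s → k} (hc : ∀ j, c j ≠ 0) :
    s * wittIndex k (diagForm w) ≤ wittIndex k (diagForm (tensor w c)) := by
  induction s with
  | zero => simp
  | succ s ih =>
    rw [(tensor_equivalent_sum_elim_castSucc w c).wittIndex_eq]
    have := wittIndex_add_wittIndex_le_sum_elim (tensor w (c ∘ Fin.castSucc))
      (c (Fin.last s) • w)
    rw [diagForm_smul, wittIndex_smul (hc _)] at this
    have := ih (c := c ∘ Fin.castSucc) fun j => hc _
    rw [add_mul, one_mul]
    omega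

/-- The `Unit` coordinate goes to the basis vector `e_{i₀}`, where `β ⟨w⟩` takes the value `β`. -/
lemma exists_injective_isometry_sum_elim [DecidableEq ι] (X : κ → k) {i₀ : ι} (hw : w i₀ = 1)
    (β : k) :
    ∃ f : diagForm (Sum.elim X fun _ : Unit => β) →qᵢ diagForm (Sum.elim X (β • w)),
      Function.Injective f := by
  refine ⟨{ toFun := fun x => Sum.elim (x ∘ Sum.inl) (x (Sum.inr ()) • Pi.single i₀ 1)
            map_add' := fun x y => by ext (i | i) <;> simp [add_smul]
            map_smul' := fun t x => by ext (i | i) <;> simp [mul_assoc]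
            map_app' := fun x => by simp [Fintype.sum_sum_type, Pi.single_apply, hw] }, ?_⟩
  intro x y h
  ext (i | u)
  · exact congrFun h (Sum.inl i)
  · have : (x (Sum.inr ()) • (Pi.single i₀ 1 : ι → k)) i₀ =
        (y (Sum.inr ()) • (Pi.single i₀ 1 : ι → k)) i₀ := congrFun h (Sum.inr i₀)
    simpa using this

end Tensor

lemma mul_lt_of_dvd_of_mul_lt_of_le_add {N a b d : ℕ} (hdvd : N ∣ a) (h : N * d < a)
    (hle : a ≤ b + (N - 1)) : N * d < b := by
  obtain ⟨e, rfl⟩ := hdvd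
  have : N * (d + 1) ≤ N * e := Nat.mul_le_mul_left N (Nat.lt_of_mul_lt_mul_left h)
  rw [mul_add, mul_one] at this
  omega

theorem witt_index_iff_subform_general
    (k : Type*) [Field k] (h2 : (2 : k) ≠ 0)
    (r m : ℕ) (a : Fin r → k) (ha : ∀ i, a i ≠ 0)
    (b : Fin (m + 1) → k) (hb : ∀ i, b i ≠ 0)
    (d : ℕ) (hd : d + 1 ≤ (m + 1) / 2) :
    2 ^ r * d < wittIndex k (QuadraticMap.weightedSumSquares k
        (fun p : Finset (Fin r) × Fin (m + 1) => (∏ i ∈ p.1, -a i) * b p.2)) ↔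
    2 ^ r * d < wittIndex k (QuadraticMap.weightedSumSquares k
        (Sum.elim
          (fun p : Finset (Fin r) × Fin m => (∏ i ∈ p.1, -a i) * b p.2.castSucc)
          (fun _ : Unit => b (Fin.last m)))) := by
  change 2 ^ r * d < wittIndex k (diagForm (tensor (pfister a) b)) ↔
    2 ^ r * d < wittIndex k (diagForm (Sum.elim (tensor (pfister a) (b ∘ Fin.castSucc))
      fun _ : Unit => b (Fin.last m)))
  have hb' : ∀ j, (b ∘ Fin.castSucc) j ≠ 0 := fun j => hb _
  have hsplit := (tensor_equivalent_sum_elim_castSucc (pfister a) b).wittIndex_eq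
  obtain ⟨f, hf⟩ := exists_injective_isometry_sum_elim (tensor (pfister a) (b ∘ Fin.castSucc))
    (pfister_empty a) (b (Fin.last m))
  have hq_le := wittIndex_le_of_injective f hf
  have hcodim := wittIndex_le_wittIndex_add_of_injective f hf
  simp only [finrank_fintype_fun_eq_card, Fintype.card_sum, Fintype.card_prod,
    Fintype.card_finset, Fintype.card_fin, Fintype.card_unit, Nat.add_sub_add_left] at hcodim
  refine ⟨fun h => ?_, fun h => by omega⟩
  by_cases hφ : (diagForm (pfister a)).Anisotropic
  · have hdvd := card_dvd_wittIndex_tensor h2 (isRound_pfister ha) hφ hb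
    rw [Fintype.card_finset, Fintype.card_fin, hsplit] at hdvd
    exact mul_lt_of_dvd_of_mul_lt_of_le_add hdvd (hsplit ▸ h) hcodim
  · have h₁ := two_pow_le_two_mul_wittIndex_pfister ha hφ
    have h₂ := mul_wittIndex_le_wittIndex_tensor (w := pfister a) hb'
    have h₃ := wittIndex_add_wittIndex_le_sum_elim (tensor (pfister a) (b ∘ Fin.castSucc))
      fun _ : Unit => b (Fin.last m)
    have h₄ := Nat.mul_le_mul_right m h₁
    have h₅ := Nat.mul_le_mul_left (2 ^ r) (show 2 * d + 1 ≤ m by omega)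
    have := Nat.one_le_two_pow (n := r)
    linarith

/-- With φ an r-fold Pfister form with coefficients a, and
b = ⟨b₁,…,bₙ⟩ (here n = m+1 ≥ 2), b' = ⟨b₁,…,b_{n−1}⟩, q = φ ⊗ b' ⊥ ⟨bₙ⟩:
for every 0 ≤ d ≤ ⌊n/2⌋ − 1, i_W(φ ⊗ b) > 2^r d ↔ i_W(q) > 2^r d.
Both forms are realized as diagonal forms. -/
theorem witt_index_iff_subform
    (k : Type*) [Field k] (h2 : (2 : k) ≠ 0)
    (r m : ℕ) (hm : 1 ≤ m) (a : Fin r → k) (ha : ∀ i, a i ≠ 0)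
    (b : Fin (m + 1) → k) (hb : ∀ i, b i ≠ 0)
    (d : ℕ) (hd : d + 1 ≤ (m + 1) / 2) :
    2 ^ r * d < wittIndex k (QuadraticMap.weightedSumSquares k
        (fun p : Finset (Fin r) × Fin (m + 1) => (∏ i ∈ p.1, -a i) * b p.2)) ↔
    2 ^ r * d < wittIndex k (QuadraticMap.weightedSumSquares k
        (Sum.elim
          (fun p : Finset (Fin r) × Fin m => (∏ i ∈ p.1, -a i) * b p.2.castSucc)
          (fun _ : Unit => b (Fin.last m)))) :=
  witt_index_iff_subform_general k h2 r m a ha b hb d hd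
end

section
/- Let C be an associative composition algebra over k and v₂ : Cⁿ → Mₙ(C) the map c ↦ (b_i c_i c̄_j)_{i,j} with b_i ∈ k*. If c, c' ∈ C^{n−1} × k both have nonzero last coordinate (lying in k·1) and v₂(c) = λ·v₂(c') for some λ ∈ k*, then c and c' are proportional: there exists μ ∈ k* with c = μ c'. In other words, v₂ induces an injective map on the open subset {cₙ ≠ 0} of P(C^{n−1} × k). -/
/-!
Since the last coordinate of `c` is the scalar `t`, the last row of `v₂ c` is
`(b n t) • c̄`; so `v₂ c = λ v₂ c'` already forces `c̄ = (λ t' / t) • c̄'`, and conjugation,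
being involutive, is injective.
-/

theorem smul_algebraMap_mul {k C : Type*} [CommSemiring k] [Semiring C] [Algebra k C]
    (b t : k) (x : C) : b • (algebraMap k C t * x) = (b * t) • x := by
  rw [← Algebra.smul_def, smul_smul]

theorem veronese_injective_on_affine_chart_general
    (k : Type*) [Field k]
    (C : Type*) [Ring C] [Algebra k C]
    (bar : C →ₗ[k] C)
    (hbari : ∀ x : C, bar (bar x) = x)
    (m : ℕ) (b : Fin (m + 1) → k) (hb : ∀ i, b i ≠ 0)
    (v₂ : (Fin (m + 1) → C) → Matrix (Fin (m + 1)) (Fin (m + 1)) C)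
    (hv₂ : ∀ c i j, v₂ c i j = b i • (c i * bar (c j)))
    (c c' : Fin (m + 1) → C) (t t' : k) (ht : t ≠ 0) (ht' : t' ≠ 0)
    (hc : c (Fin.last m) = algebraMap k C t)
    (hc' : c' (Fin.last m) = algebraMap k C t')
    (lam : k) (hlam : lam ≠ 0)
    (h : v₂ c = lam • v₂ c') :
    ∃ μ : k, μ ≠ 0 ∧ c = μ • c' := by
  have hbt : b (Fin.last m) * t ≠ 0 := mul_ne_zero (hb _) ht
  refine ⟨lam * t' / t, div_ne_zero (mul_ne_zero hlam ht') ht,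
    funext fun j => Function.Involutive.injective hbari ?_⟩
  have lastRow := congrFun (congrFun h (Fin.last m)) j
  rw [Matrix.smul_apply, hv₂, hv₂, hc, hc', smul_algebraMap_mul, smul_algebraMap_mul,
    smul_smul] at lastRow
  calc bar (c j) = (b (Fin.last m) * t)⁻¹ • (lam * (b (Fin.last m) * t')) • bar (c' j) :=
        (eq_inv_smul_iff₀ hbt).2 lastRow
    _ = bar ((lam * t' / t) • c' j) := by
        rw [smul_smul, map_smul]
        congr 1
        field_simp [hb (Fin.last m)]

/-- The Veronese map v₂(c) = (bᵢ cᵢ c̄ⱼ) is injective on the open set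
of points of P(C^{n−1} × k) with nonzero last coordinate: if c and c' both have
nonzero last coordinate lying in k·1 and v₂(c) = λ·v₂(c') with λ ∈ k*, then c = μ·c'
for some μ ∈ k*. -/
theorem veronese_injective_on_affine_chart
    (k : Type*) [Field k] (h2 : (2 : k) ≠ 0)
    (C : Type*) [Ring C] [Algebra k C]
    (φ : QuadraticForm k C)
    (hmul : ∀ x y : C, φ (x * y) = φ x * φ y)
    (bar : C →ₗ[k] C)
    (hbarm : ∀ x y : C, bar (x * y) = bar y * bar x)
    (hbari : ∀ x : C, bar (bar x) = x)
    (hconj : ∀ x : C, x * bar x = φ x • (1 : C))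
    (m : ℕ) (b : Fin (m + 1) → k) (hb : ∀ i, b i ≠ 0)
    (v₂ : (Fin (m + 1) → C) → Matrix (Fin (m + 1)) (Fin (m + 1)) C)
    (hv₂ : ∀ c i j, v₂ c i j = b i • (c i * bar (c j)))
    (c c' : Fin (m + 1) → C) (t t' : k) (ht : t ≠ 0) (ht' : t' ≠ 0)
    (hc : c (Fin.last m) = algebraMap k C t)
    (hc' : c' (Fin.last m) = algebraMap k C t')
    (lam : k) (hlam : lam ≠ 0)
    (h : v₂ c = lam • v₂ c') :
    ∃ μ : k, μ ≠ 0 ∧ c = μ • c' :=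
  veronese_injective_on_affine_chart_general k C bar hbari m b hb v₂ hv₂ c c' t t' ht ht' hc hc' lam
    hlam h
end

section
/- Let k be a field of characteristic not 2 and a ∈ k* a non-square. Let Z ⊆ P(k^{2(n−1)}) be the projectivization of the set of matrices x ∈ M_n(k(√a)) of the form having only the n-th row and n-th column nonzero (lying in the Peirce 1/2-space of E_{nn} in the Jordan algebra of σ_b-hermitian matrices) that satisfy x² = 0. Then over the algebraic closure of k, Z becomes isomorphic to the disjoint union of two copies of P^{n−2}; equivalently, the affine cone over Z̄ is the union of two linear subspaces of dimension n−1 meeting only at 0. -/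
/-!
Over `Ω` the matrix `x = mat c` vanishes off the last row and column and at the corner, so
every entry of `x²` is a sum of products `x_{i,n} x_{n,j}`; the corner entry is a sum of the
diagonal ones `x_{n,l} x_{l,n}`. Hence `x² = 0` iff `swap (c i) * c j = 0` for all `i, j`, i.e.
`(c i).2 * (c j).1 = 0` for all `i, j`. As `Ω` is a domain, this means that all second
coordinates or all first coordinates of `c` vanish: `c` lies in `Ωᵐ × 0` or in `0 × Ωᵐ`.
-/

theorem forall_mul_eq_zero_iff {ι κ R : Type*} [MulZeroClass R] [NoZeroDivisors R]
    {f : ι → R} {g : κ → R} : (∀ i j, f i * g j = 0) ↔ f = 0 ∨ g = 0 := by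
  refine ⟨fun h => or_iff_not_imp_left.2 fun hf => ?_, ?_⟩
  · obtain ⟨i, hi⟩ := Function.ne_iff.1 hf
    exact funext fun j => (mul_eq_zero.1 (h i j)).resolve_left hi
  · rintro (rfl | rfl) i j <;> simp

theorem Prod.forall_swap_mul_eq_zero_iff {ι R : Type*} [MulZeroClass R] [NoZeroDivisors R]
    {c : ι → R × R} :
    (∀ i j, (c i).swap * c j = 0) ↔ (fun i => (c i).2) = 0 ∨ (fun i => (c i).1) = 0 := by
  simp only [Prod.ext_iff, Prod.fst_mul, Prod.snd_mul, Prod.fst_swap, Prod.snd_swap,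
    Prod.fst_zero, Prod.snd_zero, forall_and]
  rw [forall_mul_eq_zero_iff, forall_mul_eq_zero_iff (f := fun i => (c i).1)]
  tauto

theorem Matrix.sq_eq_zero_iff_of_castSucc_castSucc_eq_zero {R : Type*} [CommRing R] {m : ℕ}
    {X : Matrix (Fin (m + 1)) (Fin (m + 1)) R}
    (h₀ : ∀ i j : Fin m, X i.castSucc j.castSucc = 0) (hlast : X (Fin.last m) (Fin.last m) = 0) :
    X ^ 2 = 0 ↔ ∀ i j : Fin m, X i.castSucc (Fin.last m) * X (Fin.last m) j.castSucc = 0 := by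
  have hsq : ∀ i j, (X ^ 2) i j = ∑ l : Fin m, X i l.castSucc * X l.castSucc j
      + X i (Fin.last m) * X (Fin.last m) j := fun i j => by
    rw [sq, Matrix.mul_apply, Fin.sum_univ_castSucc]
  refine ⟨fun h i j => by simpa [hsq, h₀] using congr_fun₂ h i.castSucc j.castSucc, fun h => ?_⟩
  ext i j
  induction i using Fin.lastCases <;> induction j using Fin.lastCases
  case last.last =>
    simpa [hsq, hlast] using Finset.sum_eq_zero fun l _ => (mul_comm _ _).trans (h l l)
  all_goals simp [hsq, h₀, hlast, h]

namespace LinearMap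

section Semiring

variable {R M N ι : Type*} [Semiring R] [AddCommMonoid M] [AddCommMonoid N] [Module R M]
  [Module R N] {c : ι → M × N}

theorem mem_range_compLeft_inl :
    c ∈ range ((inl R M N).compLeft ι) ↔ (fun i => (c i).2) = 0 := by
  rw [range_compLeft, range_inl]
  simp [Submodule.mem_pi, funext_iff]

theorem mem_range_compLeft_inr :
    c ∈ range ((inr R M N).compLeft ι) ↔ (fun i => (c i).1) = 0 := by
  rw [range_compLeft, range_inr]
  simp [Submodule.mem_pi, funext_iff]

end Semiring

theorem finrank_range_compLeft_of_injective {K M N ι : Type*} [Field K] [AddCommGroup M]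
    [AddCommGroup N] [Module K M] [Module K N] [FiniteDimensional K M] [Fintype ι]
    {f : M →ₗ[K] N} (hf : Function.Injective f) :
    Module.finrank K (range (f.compLeft ι)) = Fintype.card ι * Module.finrank K M := by
  rw [finrank_range_of_inj hf.comp_left, Module.finrank_pi_fintype]
  simp

end LinearMap

open Fin.NatCast in
theorem indeterminacy_locus_r_one_general
    (k : Type*) [Field k]
    (Ω : Type*) [Field Ω] [Algebra k Ω]
    (m : ℕ)
    (b : Fin (m + 1) → k) (hb : ∀ i, b i ≠ 0)
    (mat : (Fin m → Ω × Ω) → Matrix (Fin (m + 1)) (Fin (m + 1)) (Ω × Ω))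
    (hmat : ∀ c i j, mat c i j =
      if hi : i = Fin.last m then
        (if hj : j = Fin.last m then 0 else c (j.castPred hj))
      else
        (if hj : j = Fin.last m then
          algebraMap k Ω (b (Fin.last m) / b (i.castPred hi)) •
            Prod.swap (c (i.castPred hi))
        else 0)) :
    ∃ U V : Submodule Ω (Fin m → Ω × Ω),
      {c | mat c ^ 2 = 0} = (U : Set (Fin m → Ω × Ω)) ∪ (V : Set (Fin m → Ω × Ω)) ∧
      U ⊓ V = ⊥ ∧
      Module.finrank Ω U = m ∧ Module.finrank Ω V = m := by
  open LinearMap in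
  refine ⟨range ((inl Ω Ω Ω).compLeft (Fin m)), range ((inr Ω Ω Ω).compLeft (Fin m)),
    ?_, ?_, ?_, ?_⟩
  · ext c
    rw [Set.mem_union, SetLike.mem_coe, SetLike.mem_coe, mem_range_compLeft_inl,
      mem_range_compLeft_inr, ← Prod.forall_swap_mul_eq_zero_iff, Set.mem_ofPred_eq,
      Matrix.sq_eq_zero_iff_of_castSucc_castSucc_eq_zero (by simp [hmat]) (by simp [hmat])]
    simp [hmat, hb]
  · ext c
    simp only [Submodule.mem_inf, mem_range_compLeft_inl, mem_range_compLeft_inr,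
      Submodule.mem_bot]
    simp [funext_iff, Prod.ext_iff, forall_and, and_comm]
  · rw [finrank_range_compLeft_of_injective inl_injective]; simp
  · rw [finrank_range_compLeft_of_injective inr_injective]; simp

open Fin.NatCast in
/-- (r = 1 case of the indeterminacy locus Z₁.) Let a ∈ k* be a
non-square, char k ≠ 2. Over an algebraically closed extension Ω of k, the
composition algebra C = k(√a) splits as Ω × Ω with conjugation the swap. Identify
the Peirce space J_{1/2}(E_{nn}) (n = m+1) of the Jordan algebra of σ_b-hermitian
matrices with (Ω × Ω)^m, an element c corresponding to the matrix mat(c) supported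
on the last row and column, with last row c and (i,n) entry (bₙ/bᵢ)·swap(cᵢ). Then
the affine cone {c | mat(c)² = 0} over Z̄ is the union of two Ω-linear subspaces of
dimension m = n − 1 meeting only at 0. -/
theorem indeterminacy_locus_r_one
    (k : Type*) [Field k] (h2 : (2 : k) ≠ 0)
    (a : k) (ha : a ≠ 0) (hns : ∀ s : k, s ^ 2 ≠ a)
    (Ω : Type*) [Field Ω] [IsAlgClosed Ω] [Algebra k Ω]
    (m : ℕ) (hm : 1 ≤ m)
    (b : Fin (m + 1) → k) (hb : ∀ i, b i ≠ 0)
    (mat : (Fin m → Ω × Ω) → Matrix (Fin (m + 1)) (Fin (m + 1)) (Ω × Ω))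
    (hmat : ∀ c i j, mat c i j =
      if hi : i = Fin.last m then
        (if hj : j = Fin.last m then 0 else c (j.castPred hj))
      else
        (if hj : j = Fin.last m then
          algebraMap k Ω (b (Fin.last m) / b (i.castPred hi)) •
            Prod.swap (c (i.castPred hi))
        else 0)) :
    ∃ U V : Submodule Ω (Fin m → Ω × Ω),
      {c | mat c ^ 2 = 0} = (U : Set (Fin m → Ω × Ω)) ∪ (V : Set (Fin m → Ω × Ω)) ∧
      U ⊓ V = ⊥ ∧
      Module.finrank Ω U = m ∧ Module.finrank Ω V = m :=
  indeterminacy_locus_r_one_general k Ω m b hb mat hmat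
end
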